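/- Let k ≥ 1, n ≥ 1 be integers and for t ∈ ℝ let a_j(t) be the Fourier coefficients of e^{t/z}(1+z)^k. For every real t at which D_n(t) := det T_n(t) ≠ 0, the derivative of the Toeplitz determinant satisfies D_n′(t) = U⁺_n(t) · D_n(t), where U⁺_n(t) is the first component of T_n(t)^{−1} a⁺(t); equivalently, (d/dt) log D_n(t) = U⁺_n(t). -/

import Mathlib

/-!
Each entry `a_j(t)` is a polynomial in `t` with `a_j' = a_{j+1}`, so by Jacobi's formula `D_n'` is
the sum over `i` of the determinants of `T_n` with column `i` replaced by the derivative of that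
column. For the Toeplitz matrix the derivative of column `i ≥ 1` is column `i - 1`, so only the
term `i = 0` survives, and there the new column is `a⁺`. Cramer's rule identifies that determinant
with `D_n · (T_n⁻¹ a⁺)_0`.
-/

open scoped BigOperators
open Matrix

/-- The Fourier coefficients `a_j(t)` of the symbol `e^{t/z} (1+z)^k`. -/
noncomputable def aCoeff (k : ℕ) (j : ℤ) (t : ℝ) : ℝ :=
  ∑' ℓ : ℕ, t ^ ℓ / (Nat.factorial ℓ : ℝ) *
    (if 0 ≤ j + (ℓ : ℤ) then (Nat.choose k (j + (ℓ : ℤ)).toNat : ℝ) else 0)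

/-- The `n × n` Toeplitz matrix `T_n(t)` with `(i,j)` entry `a_{i-j}(t)`. -/
noncomputable def Tn (k n : ℕ) (t : ℝ) : Matrix (Fin n) (Fin n) ℝ :=
  Matrix.of fun i j : Fin n => aCoeff k (((i : ℕ) : ℤ) - ((j : ℕ) : ℤ)) t

/-- `D_n(t) = det T_n(t)`. -/
noncomputable def Dn (k n : ℕ) (t : ℝ) : ℝ := Matrix.det (Tn k n t)

/-- The vector `a⁺(t) = (a_1(t), …, a_n(t))`. -/
noncomputable def aplus (k n : ℕ) (t : ℝ) : Fin n → ℝ :=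
  fun i => aCoeff k (((i : ℕ) : ℤ) + 1) t

open Finset Nat

theorem hasDerivAt_sum_range_pow_div_factorial_mul {𝕜 : Type*} [NontriviallyNormedField 𝕜]
    [CharZero 𝕜] (c : ℕ → 𝕜) (N : ℕ) (t : 𝕜) :
    HasDerivAt (fun s => ∑ ℓ ∈ range (N + 1), s ^ ℓ / ℓ ! * c ℓ)
      (∑ ℓ ∈ range N, t ^ ℓ / ℓ ! * c (ℓ + 1)) t := by
  simp_rw [sum_range_succ' _ N, pow_zero, factorial_zero, cast_one, div_one, one_mul]
  refine (HasDerivAt.fun_sum fun ℓ _ =>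
    (((hasDerivAt_pow (ℓ + 1) t).div_const ((ℓ + 1)! : 𝕜)).mul_const (c (ℓ + 1))).congr_deriv
      ?_).add_const _
  rw [factorial_succ]
  push_cast
  field_simp

theorem aCoeff_eq_sum_range (k : ℕ) (j : ℤ) (t : ℝ) {N : ℕ} (hN : (k : ℤ) < j + N) :
    aCoeff k j t = ∑ ℓ ∈ range N, t ^ ℓ / ℓ ! *
      (if 0 ≤ j + (ℓ : ℤ) then (k.choose (j + (ℓ : ℤ)).toNat : ℝ) else 0) := by
  refine tsum_eq_sum fun ℓ hℓ => ?_
  have hNℓ : N ≤ ℓ := by simpa using hℓ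
  rw [ite_eq_right_iff.mpr fun _ => by rw [choose_eq_zero_of_lt (by omega), cast_zero],
    mul_zero]

theorem hasDerivAt_aCoeff (k : ℕ) (j : ℤ) (t : ℝ) :
    HasDerivAt (aCoeff k j) (aCoeff k (j + 1) t) t := by
  have hsum := fun s => aCoeff_eq_sum_range k j s (N := k + j.natAbs + 1) (by omega)
  rw [funext hsum, aCoeff_eq_sum_range k (j + 1) t (N := k + j.natAbs) (by omega)]
  have hshift : ∀ ℓ : ℕ, j + 1 + (ℓ : ℤ) = j + ((ℓ + 1 : ℕ) : ℤ) := fun ℓ => by push_cast; ring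
  simp only [hshift]
  exact hasDerivAt_sum_range_pow_div_factorial_mul _ _ t

theorem HasDerivAt.matrix_det {𝕜 ι : Type*} [NontriviallyNormedField 𝕜] [Fintype ι]
    [DecidableEq ι] {A : 𝕜 → Matrix ι ι 𝕜} {A' : Matrix ι ι 𝕜} {t : 𝕜}
    (h : ∀ i j, HasDerivAt (fun s => A s i j) (A' i j) t) :
    HasDerivAt (fun s => (A s).det) (∑ i, ((A t).updateCol i fun j => A' j i).det) t := by
  simp only [det_apply']
  refine (HasDerivAt.fun_sum fun σ _ => (HasDerivAt.fun_finsetProd fun i _ =>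
    h (σ i) i).const_mul ((Equiv.Perm.sign σ : ℤ) : 𝕜)).congr_deriv ?_
  simp only [Finset.mul_sum, smul_eq_mul]
  rw [Finset.sum_comm]
  refine Finset.sum_congr rfl fun i _ => Finset.sum_congr rfl fun σ _ => ?_
  rw [← Finset.mul_prod_erase _ _ (Finset.mem_univ i), updateCol_self,
    Finset.prod_congr rfl fun j hj => updateCol_ne (Finset.ne_of_mem_erase hj)]
  ring

theorem Matrix.sum_det_updateCol_toeplitz_succ {R : Type*} [CommRing R] {n : ℕ} (a : ℤ → R)
    (i₀ : Fin n) (hi₀ : (i₀ : ℕ) = 0) :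
    ∑ i : Fin n, ((of fun i j : Fin n => a ((i : ℤ) - j)).updateCol i
        fun j => a ((j : ℤ) - i + 1)).det =
      ((of fun i j : Fin n => a ((i : ℤ) - j)).updateCol i₀ fun j => a ((j : ℤ) + 1)).det := by
  rw [Finset.sum_eq_single i₀ _ (by simp)]
  · simp [hi₀]
  intro i _ hi
  have hpos : 0 < (i : ℕ) := Nat.pos_of_ne_zero fun h => hi (Fin.ext (h.trans hi₀.symm))
  have hne : (⟨i - 1, (i.val.sub_le 1).trans_lt i.isLt⟩ : Fin n) ≠ i :=
    Fin.ne_of_val_ne (by dsimp only; omega)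
  refine det_zero_of_column_eq hne.symm fun j => ?_
  rw [updateCol_self, updateCol_ne hne, of_apply]
  congr 1
  push_cast [hpos]
  ring

theorem Matrix.det_mul_inv_mulVec_apply {ι R : Type*} [Fintype ι] [DecidableEq ι] [CommRing R]
    (A : Matrix ι ι R) (b : ι → R) (i : ι) (h : IsUnit A.det) :
    A.det * (A⁻¹ *ᵥ b) i = (A.updateCol i b).det := by
  simpa [cramer_apply] using congrFun (det_smul_inv_mulVec_eq_cramer A b h) i

/-- Identity (3.22) of Tracy–Widom: `(d/dt) log D_n(t) = U⁺_n(t)`, i.e.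
`D_n'(t) = U⁺_n(t) D_n(t)`, where `U⁺_n(t)` is the first component of
`T_n(t)⁻¹ a⁺(t)`. -/
theorem deriv_log_Dn (k n : ℕ) (hn : 1 ≤ n) (t : ℝ)
    (ht : Dn k n t ≠ 0) :
    deriv (Dn k n) t = ((Tn k n t)⁻¹ *ᵥ aplus k n t) ⟨0, by omega⟩ * Dn k n t := by
  have hD : HasDerivAt (Dn k n)
      (∑ i, ((Tn k n t).updateCol i fun j => aCoeff k ((j : ℤ) - i + 1) t).det) t :=
    HasDerivAt.matrix_det fun i j => hasDerivAt_aCoeff k _ t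
  rw [hD.deriv, mul_comm, Dn, det_mul_inv_mulVec_apply _ _ _ (isUnit_iff_ne_zero.mpr ht)]
  exact sum_det_updateCol_toeplitz_succ (fun j => aCoeff k j t) _ rfl
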